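/- Let z_1,...,z_d be nonzero elements of a field and let 1 ≤ m ≤ d. For any integer n ≥ m: e_n(1/z_1,...,1/z_d) · ∏_{i=1}^m z_i = ∑_{i=0}^{m} e_i(z_1,...,z_m) · e_{n-m+i}(1/z_{m+1},...,1/z_d). -/

import Mathlib

/-!
Split the variables into `z₁, …, zₘ` and the rest: `eₙ` of the union is the convolution
`∑ᵢ eᵢ(1/z₁, …, 1/zₘ) eₙ₋ᵢ(1/zₘ₊₁, …, 1/z_d)`. Multiplying by `z₁ ⋯ zₘ` turns
`eᵢ(1/z₁, …, 1/zₘ)` into `eₘ₋ᵢ(z₁, …, zₘ)` (pass to complementary index sets), the terms with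
`i > m` vanish, and reversing the summation index gives the claim.
-/

/-- Elementary symmetric polynomial `e_k(t 0, ..., t (r-1))`. -/
def esymP {R : Type*} [CommRing R] {r : ℕ} (t : Fin r → R) (k : ℕ) : R :=
  ∑ s ∈ Finset.univ.powersetCard k, ∏ i ∈ s, t i

open Finset

namespace Multiset

variable {R : Type*} [CommSemiring R]

@[simp]
theorem esymm_zero (s : Multiset R) : s.esymm 0 = 1 := by
  simp [esymm, powersetCard_zero_left]

theorem esymm_eq_zero_of_card_lt {s : Multiset R} {k : ℕ} (h : card s < k) : s.esymm k = 0 := by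
  simp [esymm, powersetCard_eq_empty k h]

theorem esymm_cons_succ (a : R) (s : Multiset R) (k : ℕ) :
    (a ::ₘ s).esymm (k + 1) = s.esymm (k + 1) + a * s.esymm k := by
  simp only [esymm, powersetCard_cons, map_add, sum_add, map_map, Function.comp_def, prod_cons,
    sum_map_mul_left]

theorem esymm_add (s t : Multiset R) (n : ℕ) :
    (s + t).esymm n = ∑ p ∈ Finset.HasAntidiagonal.antidiagonal n, s.esymm p.1 * t.esymm p.2 := by
  induction s using Multiset.induction_on generalizing n with
  | empty =>
    rw [zero_add, Finset.sum_eq_single (0, n)]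
    · simp
    · rintro ⟨_ | i, j⟩ hij hne
      · simp_all
      · rw [esymm_eq_zero_of_card_lt (by simp), zero_mul]
    · simp
  | cons a s ih =>
    cases n with
    | zero => simp
    | succ n =>
      rw [cons_add, esymm_cons_succ, ih, ih, Nat.sum_antidiagonal_succ, Nat.sum_antidiagonal_succ]
      simp only [esymm_cons_succ, esymm_zero, add_mul, sum_add_distrib, mul_assoc, ← mul_sum]
      ring

end Multiset

section esymP

variable {R : Type*} [CommRing R]

theorem esymP_eq_esymm {r : ℕ} (t : Fin r → R) (k : ℕ) :
    esymP t k = (univ.val.map t).esymm k :=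
  (esymm_map_val t univ k).symm

theorem esymP_eq_zero_of_lt {r k : ℕ} (t : Fin r → R) (h : r < k) : esymP t k = 0 := by
  rw [esymP, powersetCard_eq_empty.2 (by rwa [card_univ, Fintype.card_fin]), sum_empty]

theorem esymP_eq_sum_mul_esymP_castLE {d m : ℕ} (hmd : m ≤ d) (t : Fin d → R) (n : ℕ) :
    esymP t n = ∑ k ∈ range (n + 1),
      esymP (fun j : Fin m => t (Fin.castLE hmd j)) k *
        esymP (fun j : Fin (d - m) => t ⟨m + j.1, by omega⟩) (n - k) := by
  have hsplit : univ.val.map t = univ.val.map (fun j : Fin m => t (Fin.castLE hmd j)) +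
      univ.val.map (fun j : Fin (d - m) => t ⟨m + j.1, by omega⟩) := by
    obtain ⟨e, rfl⟩ := Nat.exists_eq_add_of_le hmd
    simp only [Fin.univ_val_map, List.ofFn_add, Multiset.coe_add, Nat.add_sub_cancel_left]
    rfl
  rw [esymP_eq_esymm, hsplit, Multiset.esymm_add, Nat.sum_antidiagonal_eq_sum_range_succ_mk]
  simp only [esymP_eq_esymm]

end esymP

theorem esymP_inv_mul_prod {F : Type*} [Field F] {r k : ℕ} (t : Fin r → F) (ht : ∀ i, t i ≠ 0)
    (hk : k ≤ r) : esymP (fun i => (t i)⁻¹) k * ∏ i, t i = esymP t (r - k) := by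
  rw [esymP, esymP, sum_mul]
  -- complementation matches `k`-subsets with `(r - k)`-subsets, and `∏ₛ t⁻¹ * ∏ t = ∏ₛᶜ t`
  refine sum_nbij' compl compl ?_ ?_ (fun _ _ => compl_compl _) (fun _ _ => compl_compl _) ?_
  · intro s hs
    rw [mem_powersetCard_univ] at hs ⊢
    rw [card_compl, Fintype.card_fin, hs]
  · intro s hs
    rw [mem_powersetCard_univ] at hs ⊢
    rw [card_compl, Fintype.card_fin, hs, Nat.sub_sub_self hk]
  · intro s _
    rw [← prod_mul_prod_compl s, prod_inv_distrib, inv_mul_cancel_left₀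
      (prod_ne_zero_iff.2 fun i _ => ht i)]

theorem esymm_inv_prod_large {F : Type*} [Field F] (d m n : ℕ) (hmd : m ≤ d)
    (hn : m ≤ n) (z : Fin d → F) (hz : ∀ i, z i ≠ 0) :
    esymP (fun i => (z i)⁻¹) n * ∏ i : Fin m, z (Fin.castLE hmd i)
      = ∑ i ∈ Finset.range (m + 1),
          esymP (fun j : Fin m => z (Fin.castLE hmd j)) i *
            esymP (fun j : Fin (d - m) => (z ⟨m + j.1, by omega⟩)⁻¹) (n - m + i) := by
  rw [esymP_eq_sum_mul_esymP_castLE hmd, sum_mul,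
    ← sum_subset (range_subset_range.2 (by omega : m + 1 ≤ n + 1)) fun k _ hk => by
      rw [esymP_eq_zero_of_lt _ (by simpa using hk), zero_mul, zero_mul],
    ← sum_range_reflect]
  refine sum_congr rfl fun k hk => ?_
  have hkm : k ≤ m := Nat.lt_succ_iff.1 (mem_range.1 hk)
  rw [Nat.add_sub_cancel, mul_right_comm,
    esymP_inv_mul_prod (fun j => z (Fin.castLE hmd j)) (fun _ => hz _) (Nat.sub_le m k),
    Nat.sub_sub_self hkm, show n - (m - k) = n - m + k by omega]
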